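/- Concentration of truncated Fourier projections on the circle (the d = 2 case of the spherical harmonic concentration lemma): for every φ > 0 and every ε ∈ (0,1) there exist Φ > 0 and L₀ ∈ ℕ such that for all natural numbers L ≥ L₀, every point θ₀ of the circle ℝ/2πℤ, and every f ∈ L²(ℝ/2πℤ) that vanishes almost everywhere outside the arc {θ : dist(θ,θ₀) < φ/L}, the orthogonal projection P_L f of f onto the span of {e^{inθ} : n ∈ ℤ, |n| ≤ L} satisfies ∫_{dist(θ,θ₀) ≥ Φ/L} |P_L f(θ)|² dθ ≤ ε · ‖f‖²_{L²(ℝ/2πℤ)}. -/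

import Mathlib

open MeasureTheory Filter

instance : Fact (0 < 2 * Real.pi) := ⟨Real.two_pi_pos⟩

/-- Orthogonal projection onto trigonometric polynomials of degree at most `L`
on the circle `ℝ/2πℤ`, expressed pointwise via Fourier coefficients. -/
noncomputable def fourierProj (L : ℕ) (f : AddCircle (2 * Real.pi) → ℂ)
    (θ : AddCircle (2 * Real.pi)) : ℂ :=
  ∑ n ∈ Finset.Icc (-(L : ℤ)) (L : ℤ), fourierCoeff f n • fourier n θ

/-!
`P_L f` is the convolution of `f` with the Dirichlet kernel `D_L = ∑_{|n| ≤ L} e_n`, and summing the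
geometric series and using Jordan's inequality gives `|D_L(x)| ≤ π / |x|`. If `f` vanishes off the
arc of radius `c` around `θ₀`, then at distance `d > c` from `θ₀` this yields
`|P_L f| ≤ ‖f‖_{L¹(arc)} / (2 (d - c))`, and Cauchy–Schwarz on the arc gives
`‖f‖_{L¹(arc)}² ≤ 2c ‖f‖₂²`. Since `∫_{d ≥ R} (d - c)⁻² ≤ 2 / (R - c)`, the mass of `P_L f` at
distance at least `R` is at most `c / (R - c) · ‖f‖₂²`; with `c = φ / L` and `R = (φ + φ / ε) / L`
this ratio is exactly `ε`, independently of `L`.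
-/

open Set Topology

theorem hasDerivAt_neg_inv_sub {c u : ℝ} (h : u ≠ c) :
    HasDerivAt (fun x => -(x - c)⁻¹) ((u - c) ^ 2)⁻¹ u :=
  (((hasDerivAt_id u).sub_const c).inv (sub_ne_zero.2 h)).neg.congr_deriv (by simp [neg_div])

theorem tendsto_neg_inv_sub_atTop (c : ℝ) : Tendsto (fun x => -(x - c)⁻¹) atTop (𝓝 0) := by
  simpa [sub_eq_add_neg] using
    (tendsto_inv_atTop_zero.comp (tendsto_atTop_add_const_right _ (-c) tendsto_id)).neg

theorem integrableOn_Ioi_inv_sub_sq {c R : ℝ} (h : c < R) :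
    IntegrableOn (fun u => ((u - c) ^ 2)⁻¹) (Ioi R) :=
  integrableOn_Ioi_deriv_of_nonneg' (fun u hu => hasDerivAt_neg_inv_sub (h.trans_le hu).ne')
    (fun u _ => by positivity) (tendsto_neg_inv_sub_atTop c)

theorem integral_Ioi_inv_sub_sq {c R : ℝ} (h : c < R) :
    ∫ u in Ioi R, ((u - c) ^ 2)⁻¹ = (R - c)⁻¹ := by
  rw [integral_Ioi_of_hasDerivAt_of_nonneg'
    (fun u hu => hasDerivAt_neg_inv_sub (h.trans_le hu).ne') (fun u _ => by positivity)
    (tendsto_neg_inv_sub_atTop c)]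
  simp

theorem sq_setIntegral_norm_le {α E : Type*} [MeasurableSpace α] [NormedAddCommGroup E]
    {μ : Measure α} {f : α → E} (hf : MemLp f 2 μ) {s : Set α} (hs : μ s ≠ ⊤) :
    (∫ x in s, ‖f x‖ ∂μ) ^ 2 ≤ μ.real s * ∫ x in s, ‖f x‖ ^ 2 ∂μ := by
  have : Fact (μ s < ⊤) := ⟨hs.lt_top⟩
  have hcs := integral_mul_norm_le_Lp_mul_Lq (μ := μ.restrict s) (f := fun x => ‖f x‖)
    (g := fun _ => (1 : ℝ)) Real.HolderConjugate.two_two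
    (by simpa using (hf.norm.restrict s)) (by simpa using memLp_const 1)
  simp only [norm_norm, norm_one, one_pow, mul_one, integral_const, smul_eq_mul,
    measureReal_restrict_apply_univ, Real.rpow_two, ← Real.sqrt_eq_rpow] at hcs
  calc (∫ x in s, ‖f x‖ ∂μ) ^ 2 ≤ (√(∫ x in s, ‖f x‖ ^ 2 ∂μ) * √(μ.real s)) ^ 2 := by
        gcongr
    _ = μ.real s * ∫ x in s, ‖f x‖ ^ 2 ∂μ := by
        rw [mul_pow, Real.sq_sqrt (integral_nonneg fun x => by positivity),
          Real.sq_sqrt measureReal_nonneg, mul_comm]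

theorem mul_sub_one_mul_sum_Icc_zpow {K : Type*} [Field K] {z : K} (hz : z ≠ 0) (L : ℕ) :
    (z - 1) * ∑ n ∈ Finset.Icc (-(L : ℤ)) L, z ^ n = z ^ ((L : ℤ) + 1) - z ^ (-(L : ℤ)) := by
  induction L with
  | zero => simp
  | succ L ih =>
    have hIcc : Finset.Icc (-((L + 1 : ℕ) : ℤ)) ((L + 1 : ℕ) : ℤ)
        = insert (-((L : ℤ) + 1)) (insert ((L : ℤ) + 1) (Finset.Icc (-(L : ℤ)) L)) := by
      ext n; simp; omega
    rw [hIcc, Finset.sum_insert (by simp; omega), Finset.sum_insert (by simp), mul_add, mul_add, ih]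
    push_cast
    simp only [zpow_add₀ hz, zpow_neg, zpow_one]
    field_simp
    ring

theorem norm_sum_Icc_zpow_le {K : Type*} [NormedField K] {z : K} (hz : ‖z‖ = 1) (hz1 : z ≠ 1)
    (L : ℕ) : ‖∑ n ∈ Finset.Icc (-(L : ℤ)) L, z ^ n‖ ≤ 2 / ‖z - 1‖ := by
  have hz0 : z ≠ 0 := norm_ne_zero_iff.1 (by rw [hz]; exact one_ne_zero)
  rw [le_div_iff₀ (norm_pos_iff.2 (sub_ne_zero.2 hz1)), mul_comm, ← norm_mul,
    mul_sub_one_mul_sum_Icc_zpow hz0]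
  calc _ ≤ ‖z ^ ((L : ℤ) + 1)‖ + ‖z ^ (-(L : ℤ))‖ := norm_sub_le _ _
    _ = 2 := by simp [norm_zpow, hz]; norm_num

namespace AddCircle

variable {T : ℝ}

theorem fourier_sub_apply (n : ℤ) (x y : AddCircle T) :
    fourier n (x - y) = fourier n x * fourier (-n) y := by
  simp [fourier_apply, sub_eq_add_neg, smul_add, smul_neg, neg_smul, toCircle_add]

theorem fourier_coe_eq_zpow (n : ℤ) (u : ℝ) :
    fourier n (u : AddCircle T) = Complex.exp (Complex.I * ↑(2 * Real.pi * u / T)) ^ n := by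
  rw [fourier_coe_apply, ← Complex.exp_int_mul]
  push_cast
  ring_nf

variable [hT : Fact (0 < T)]

theorem norm_coe_eq_abs_of_mem_Ioc {u : ℝ} (hu : u ∈ Ioc (-(T / 2)) (T / 2)) :
    ‖(u : AddCircle T)‖ = |u| :=
  (norm_coe_eq_abs_iff T hT.out.ne').2 (by rw [abs_of_pos hT.out, abs_le]; exact ⟨hu.1.le, hu.2⟩)

theorem exists_coe_eq_and_norm_eq_abs (x : AddCircle T) :
    ∃ u : ℝ, (u : AddCircle T) = x ∧ ‖x‖ = |u| := by
  obtain ⟨hlo, hhi⟩ := (equivIoc T (-(T / 2)) x).2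
  have hu : (equivIoc T (-(T / 2)) x : ℝ) ∈ Ioc (-(T / 2)) (T / 2) := ⟨hlo, by linarith⟩
  exact ⟨_, coe_equivIoc, by rw [← norm_coe_eq_abs_of_mem_Ioc hu, coe_equivIoc]⟩

theorem measureReal_ball_le (x : AddCircle T) {c : ℝ} (hc : 0 ≤ c) :
    volume.real (Metric.ball x c) ≤ 2 * c :=
  calc volume.real (Metric.ball x c) ≤ volume.real (Metric.closedBall x c) :=
        measureReal_mono Metric.ball_subset_closedBall
    _ ≤ 2 * c := by
        rw [measureReal_def, volume_closedBall,
          ENNReal.toReal_ofReal (le_min hT.out.le (by linarith))]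
        exact min_le_right _ _

noncomputable def dirichletKernel (L : ℕ) (x : AddCircle T) : ℂ :=
  ∑ n ∈ Finset.Icc (-(L : ℤ)) L, fourier n x

theorem norm_dirichletKernel_le (L : ℕ) {x : AddCircle T} (hx : x ≠ 0) :
    ‖dirichletKernel L x‖ ≤ T / (2 * ‖x‖) := by
  obtain ⟨u, rfl, hnorm⟩ := exists_coe_eq_and_norm_eq_abs x
  have hT0 := hT.out
  have hu : 0 < |u| := hnorm ▸ norm_pos_iff.2 hx
  have hhalf : |u| ≤ T / 2 := by
    have := norm_le_half_period T hT0.ne' (x := (u : AddCircle T))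
    rwa [hnorm, abs_of_pos hT0] at this
  set z := Complex.exp (Complex.I * ↑(2 * Real.pi * u / T))
  have hz : ‖z‖ = 1 := Complex.norm_exp_I_mul_ofReal _
  have hz1 : 4 * |u| / T ≤ ‖z - 1‖ := by
    rw [Complex.norm_exp_I_mul_ofReal_sub_one, norm_mul, Real.norm_eq_abs, Real.norm_eq_abs,
      abs_two, show 2 * Real.pi * u / T / 2 = Real.pi / T * u by ring]
    have hle : |Real.pi / T * u| ≤ Real.pi / 2 := by
      rw [abs_mul, abs_of_pos (by positivity)]
      calc Real.pi / T * |u| ≤ Real.pi / T * (T / 2) := by gcongr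
        _ = Real.pi / 2 := by field_simp
    have := Real.mul_abs_le_abs_sin hle
    rw [abs_mul, abs_of_pos (by positivity : 0 < Real.pi / T)] at this
    calc 4 * |u| / T = 2 * (2 / Real.pi * (Real.pi / T * |u|)) := by field_simp; ring
      _ ≤ _ := by gcongr
  have hpos : 0 < 4 * |u| / T := by positivity
  calc ‖dirichletKernel L (u : AddCircle T)‖ = ‖∑ n ∈ Finset.Icc (-(L : ℤ)) L, z ^ n‖ := by
        simp only [dirichletKernel, fourier_coe_eq_zpow]; rfl
    _ ≤ 2 / ‖z - 1‖ := norm_sum_Icc_zpow_le hz (by rintro h; simp [h] at hz1; linarith) L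
    _ ≤ 2 / (4 * |u| / T) := by gcongr
    _ = T / (2 * |u|) := by field_simp; ring
    _ = _ := by rw [hnorm]

theorem sum_fourierCoeff_smul_fourier_eq_integral {f : AddCircle T → ℂ} (hf : Integrable f)
    (L : ℕ) (θ : AddCircle T) :
    ∑ n ∈ Finset.Icc (-(L : ℤ)) L, fourierCoeff f n • fourier n θ
      = T⁻¹ • ∫ η, dirichletKernel L (θ - η) * f η := by
  have hf' : Integrable f haarAddCircle := by
    rw [← memLp_one_iff_integrable, memLp_haarAddCircle_iff, memLp_one_iff_integrable]
    exact hf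
  have hterm : ∀ n : ℤ, Integrable (fun η => fourier n θ * (fourier (-n) η * f η)) haarAddCircle :=
    fun n => (hf'.bdd_mul (c := 1) (fourier (-n)).continuous.aestronglyMeasurable
      (ae_of_all _ fun η => (Circle.norm_coe _).le)).const_mul _
  rw [← integral_haarAddCircle]
  simp_rw [dirichletKernel, fourier_sub_apply, Finset.sum_mul, mul_assoc]
  rw [integral_finsetSum _ fun n _ => hterm n]
  refine Finset.sum_congr rfl fun n _ => ?_
  rw [fourierCoeff, smul_eq_mul, mul_comm, ← integral_const_mul]
  simp only [smul_eq_mul]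

theorem integrableOn_inv_sq_dist_sub {c R : ℝ} (hcR : c < R) (θ₀ : AddCircle T) :
    IntegrableOn (fun θ => ((dist θ θ₀ - c) ^ 2)⁻¹) {θ | R ≤ dist θ θ₀} := by
  refine ContinuousOn.integrableOn_compact
    (isClosed_le continuous_const (continuous_id.dist continuous_const)).isCompact
    (ContinuousOn.inv₀ (by fun_prop) fun θ hθ => ?_)
  have : R ≤ dist θ θ₀ := hθ
  have : 0 < dist θ θ₀ - c := by linarith
  positivity

theorem setIntegral_inv_sq_dist_sub_le {c R : ℝ} (hR : 0 < R) (hcR : c < R) (θ₀ : AddCircle T) :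
    ∫ θ in {θ | R ≤ dist θ θ₀}, ((dist θ θ₀ - c) ^ 2)⁻¹ ≤ 2 / (R - c) := by
  set G : ℝ → ℝ := (Ici R).indicator fun u => ((u - c) ^ 2)⁻¹
  have hG : Integrable G := ((integrableOn_Ici_iff_integrableOn_Ioi (by simp)).2
    (integrableOn_Ioi_inv_sub_sq hcR)).integrable_indicator measurableSet_Ici
  have hG0 : ∀ u, 0 ≤ G u := fun u => indicator_nonneg (fun u _ => by positivity) u
  have habs : ∀ u, G |u| = G u + G (-u) := by
    intro u
    rcases le_total 0 u with hu | hu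
    · have : G (-u) = 0 := indicator_of_notMem (by rw [mem_Ici]; linarith) _
      rw [abs_of_nonneg hu, this, add_zero]
    · have : G u = 0 := indicator_of_notMem (by rw [mem_Ici]; linarith) _
      rw [abs_of_nonpos hu, this, zero_add]
  have hhalf : -(T / 2) + T = T / 2 := by ring
  calc ∫ θ in {θ | R ≤ dist θ θ₀}, ((dist θ θ₀ - c) ^ 2)⁻¹ = ∫ θ, G ‖θ‖ := by
        rw [← integral_indicator (measurableSet_le measurable_const (by fun_prop)),
          ← integral_sub_right_eq_self (fun θ => G ‖θ‖) θ₀]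
        congr 1 with θ
        simp [G, indicator, dist_eq_norm]
    _ = ∫ u in Ioc (-(T / 2)) (T / 2), G |u| := by
        rw [← AddCircle.integral_preimage T (-(T / 2)), hhalf]
        refine setIntegral_congr_fun measurableSet_Ioc fun u hu => ?_
        rw [norm_coe_eq_abs_of_mem_Ioc hu]
    _ ≤ ∫ u, G |u| := setIntegral_le_integral (by simp_rw [habs]; exact hG.add hG.comp_neg)
          (ae_of_all _ fun u => hG0 _)
    _ = 2 * ∫ u, G u := by
        simp_rw [habs]
        rw [integral_add hG hG.comp_neg, integral_neg_eq_self]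
        ring
    _ = 2 / (R - c) := by
        rw [integral_indicator measurableSet_Ici, integral_Ici_eq_integral_Ioi,
          integral_Ioi_inv_sub_sq hcR, div_eq_mul_inv]

end AddCircle

theorem norm_fourierProj_le {L : ℕ} {c : ℝ} {θ₀ θ : AddCircle (2 * Real.pi)}
    {f : AddCircle (2 * Real.pi) → ℂ} (hf : Integrable f)
    (hsupp : ∀ᵐ η, c ≤ dist η θ₀ → f η = 0) (hθ : c < dist θ θ₀) :
    ‖fourierProj L f θ‖ ≤ (∫ η in Metric.ball θ₀ c, ‖f η‖) / (2 * (dist θ θ₀ - c)) := by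
  have hdc : 0 < dist θ θ₀ - c := by linarith
  have hkernel : ∀ η ∈ Metric.ball θ₀ c,
      ‖AddCircle.dirichletKernel L (θ - η)‖ ≤ 2 * Real.pi / (2 * (dist θ θ₀ - c)) := by
    intro η hη
    have hη' : dist θ θ₀ - c ≤ ‖θ - η‖ := by
      rw [← dist_eq_norm]
      linarith [dist_triangle θ η θ₀, Metric.mem_ball.1 hη]
    refine (AddCircle.norm_dirichletKernel_le L (sub_ne_zero.2 ?_)).trans (by gcongr)
    rintro rfl
    rw [sub_self, norm_zero] at hη'
    linarith
  have hvanish : ∀ᵐ η, η ∉ Metric.ball θ₀ c → AddCircle.dirichletKernel L (θ - η) * f η = 0 := by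
    filter_upwards [hsupp] with η hη hnot
    rw [hη (not_lt.1 hnot), mul_zero]
  rw [fourierProj, AddCircle.sum_fourierCoeff_smul_fourier_eq_integral hf, norm_smul,
    ← setIntegral_eq_integral_of_ae_compl_eq_zero hvanish]
  calc ‖(2 * Real.pi)⁻¹‖ * ‖∫ η in Metric.ball θ₀ c, AddCircle.dirichletKernel L (θ - η) * f η‖
      ≤ ‖(2 * Real.pi)⁻¹‖ * ∫ η in Metric.ball θ₀ c,
          2 * Real.pi / (2 * (dist θ θ₀ - c)) * ‖f η‖ := by
        gcongr
        refine norm_integral_le_of_norm_le (hf.norm.integrableOn.const_mul _) ?_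
        refine ae_restrict_of_forall_mem Metric.isOpen_ball.measurableSet fun η hη => ?_
        rw [norm_mul]
        gcongr
        exact hkernel η hη
    _ = (∫ η in Metric.ball θ₀ c, ‖f η‖) / (2 * (dist θ θ₀ - c)) := by
        rw [integral_const_mul, Real.norm_of_nonneg (by positivity)]
        field_simp

theorem setIntegral_norm_fourierProj_sq_le {L : ℕ} {c R : ℝ} {θ₀ : AddCircle (2 * Real.pi)}
    {f : AddCircle (2 * Real.pi) → ℂ} (hc : 0 ≤ c) (hcR : c < R) (hf : MemLp f 2)
    (hsupp : ∀ᵐ η, c ≤ dist η θ₀ → f η = 0) :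
    ∫ θ in {θ | R ≤ dist θ θ₀}, ‖fourierProj L f θ‖ ^ 2
      ≤ c / (R - c) * ∫ θ, ‖f θ‖ ^ 2 := by
  set A := ∫ η in Metric.ball θ₀ c, ‖f η‖
  have hA : A ^ 2 ≤ 2 * c * ∫ θ, ‖f θ‖ ^ 2 :=
    (sq_setIntegral_norm_le hf (measure_ne_top _ _)).trans <|
      mul_le_mul (AddCircle.measureReal_ball_le θ₀ hc)
        (setIntegral_le_integral hf.norm.integrable_sq (ae_of_all _ fun _ => by positivity))
        (integral_nonneg fun _ => by positivity) (by positivity)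
  have hpoint : ∀ θ ∈ {θ | R ≤ dist θ θ₀},
      ‖fourierProj L f θ‖ ^ 2 ≤ A ^ 2 / 4 * ((dist θ θ₀ - c) ^ 2)⁻¹ := by
    intro θ (hθ : R ≤ dist θ θ₀)
    have hdc : 0 < dist θ θ₀ - c := by linarith
    calc ‖fourierProj L f θ‖ ^ 2 ≤ (A / (2 * (dist θ θ₀ - c))) ^ 2 := by
          gcongr
          exact norm_fourierProj_le (hf.integrable one_le_two) hsupp (by linarith)
      _ = A ^ 2 / 4 * ((dist θ θ₀ - c) ^ 2)⁻¹ := by field_simp; ring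
  have hmeas : MeasurableSet {θ : AddCircle (2 * Real.pi) | R ≤ dist θ θ₀} :=
    measurableSet_le measurable_const (by fun_prop)
  calc ∫ θ in {θ | R ≤ dist θ θ₀}, ‖fourierProj L f θ‖ ^ 2
      ≤ ∫ θ in {θ | R ≤ dist θ θ₀}, A ^ 2 / 4 * ((dist θ θ₀ - c) ^ 2)⁻¹ :=
        integral_mono_of_nonneg (ae_of_all _ fun _ => by positivity)
          ((AddCircle.integrableOn_inv_sq_dist_sub hcR θ₀).const_mul _)
          (ae_restrict_of_forall_mem hmeas hpoint)
    _ = A ^ 2 / 4 * ∫ θ in {θ | R ≤ dist θ θ₀}, ((dist θ θ₀ - c) ^ 2)⁻¹ := integral_const_mul _ _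
    _ ≤ 2 * c * (∫ θ, ‖f θ‖ ^ 2) / 4 * (2 / (R - c)) := by
        gcongr
        exact AddCircle.setIntegral_inv_sq_dist_sub_le (by linarith) hcR θ₀
    _ = c / (R - c) * ∫ θ, ‖f θ‖ ^ 2 := by
        have : R - c ≠ 0 := by linarith
        field_simp
        ring

theorem fourierProj_concentration :
    ∀ φ > (0:ℝ), ∀ ε ∈ Set.Ioo (0:ℝ) 1, ∃ Φ > (0:ℝ), ∃ L₀ : ℕ,
      ∀ L : ℕ, L₀ ≤ L → ∀ θ₀ : AddCircle (2 * Real.pi),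
        ∀ f : AddCircle (2 * Real.pi) → ℂ, MemLp f 2 volume →
          (∀ᵐ θ, φ / L ≤ dist θ θ₀ → f θ = 0) →
          ∫ θ in {θ : AddCircle (2 * Real.pi) | Φ / L ≤ dist θ θ₀},
              ‖fourierProj L f θ‖ ^ 2
            ≤ ε * ∫ θ : AddCircle (2 * Real.pi), ‖f θ‖ ^ 2 := by
  intro φ hφ ε hε
  obtain ⟨hε, -⟩ := hε
  refine ⟨φ + φ / ε, by positivity, 1, fun L hL θ₀ f hf hsupp => ?_⟩
  have hL : (0 : ℝ) < L := by exact_mod_cast hL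
  have hratio : φ / L / ((φ + φ / ε) / L - φ / L) = ε := by field_simp; ring
  have hlt : φ / L < (φ + φ / ε) / L := by gcongr; linarith [div_pos hφ hε]
  simpa only [hratio] using setIntegral_norm_fourierProj_sq_le (by positivity) hlt hf hsupp
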